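/- arXiv:1406.0764 — 3 statements merged into one kernel-verified Lean document; each statement's English description precedes it below -/
import Mathlib

section
/- Let K ≥ 1 be an integer and let a, b ∈ ℝ^K with maximizer set π* = {i : a_i = max_{1≤j≤K} a_j}. Then the quantity max_{1≤i≤K}(a_i + b_i) − max_{i∈π*}(a_i + b_i) is non-negative and is bounded above by max_{1≤i≤K} b_i − max_{i∈π*} b_i. (Lemma 1, part II of the supplement.) -/
/-! On `π*` the vector `a` is constant, equal to `M := max a`, so
`max_{π*} (a + b) = M + max_{π*} b`, while `max (a + b) ≤ M + max b`.
Subtracting gives the upper bound; the lower bound is monotonicity of `max` in the index set. -/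

namespace Finset

variable {ι G : Type*}

lemma sup'_add_le [AddCommMonoid G] [LinearOrder G] [IsOrderedAddMonoid G]
    (s : Finset ι) (hs : s.Nonempty) (f g : ι → G) :
    s.sup' hs (fun i => f i + g i) ≤ s.sup' hs f + s.sup' hs g :=
  sup'_le hs _ fun _ hi => add_le_add (le_sup' f hi) (le_sup' g hi)

variable [AddCommGroup G] [LinearOrder G] [IsOrderedAddMonoid G]

lemma sup'_add_eq_const_add {s : Finset ι} (hs : s.Nonempty) {f : ι → G} {c : G}
    (hf : ∀ i ∈ s, f i = c) (g : ι → G) :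
    s.sup' hs (fun i => f i + g i) = c + s.sup' hs g := by
  rw [add_sup']
  exact sup'_congr hs rfl fun i hi => by rw [hf i hi]

lemma sup'_add_sub_sup'_add_le_of_eq_sup' {s t : Finset ι} (hs : s.Nonempty)
    (ht : t.Nonempty) {f : ι → G} (hf : ∀ i ∈ t, f i = s.sup' hs f) (g : ι → G) :
    s.sup' hs (fun i => f i + g i) - t.sup' ht (fun i => f i + g i)
      ≤ s.sup' hs g - t.sup' ht g := by
  rw [sup'_add_eq_const_add ht hf g, sub_add_eq_sub_sub, sub_le_sub_iff_right,
    sub_le_iff_le_add']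
  exact sup'_add_le s hs f g

end Finset

/-- Lemma 1, part II (supplement): for `a, b ∈ ℝ^K` with maximizer set
`π* = {i : a i = max_j a j}`, the quantity
`max_i (a i + b i) - max_{i ∈ π*} (a i + b i)` is non-negative and bounded
above by `max_i b i - max_{i ∈ π*} b i`. -/
theorem stmt_1 (K : ℕ) (hK : 1 ≤ K) (a b : Fin K → ℝ)
    (πs : Finset (Fin K))
    (hπ : πs = Finset.univ.filter fun i =>
      a i = Finset.univ.sup' ⟨⟨0, hK⟩, Finset.mem_univ _⟩ a)
    (hne : πs.Nonempty) :
    0 ≤ Finset.univ.sup' ⟨⟨0, hK⟩, Finset.mem_univ _⟩ (fun i => a i + b i)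
        - πs.sup' hne (fun i => a i + b i) ∧
    Finset.univ.sup' ⟨⟨0, hK⟩, Finset.mem_univ _⟩ (fun i => a i + b i)
        - πs.sup' hne (fun i => a i + b i)
      ≤ Finset.univ.sup' ⟨⟨0, hK⟩, Finset.mem_univ _⟩ b - πs.sup' hne b := by
  have ha_max : ∀ i ∈ πs, a i = Finset.univ.sup' ⟨⟨0, hK⟩, Finset.mem_univ _⟩ a := by
    intro i hi
    rw [hπ] at hi
    exact (Finset.mem_filter.mp hi).2
  exact ⟨sub_nonneg.mpr (Finset.sup'_mono _ (Finset.subset_univ πs) hne),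
    Finset.sup'_add_sub_sup'_add_le_of_eq_sup' _ hne ha_max b⟩
end

section
/- Let p ≥ 1, let A be a nonempty finite index set, let φ_a ∈ ℝ^p for each a ∈ A, let θ₀ ∈ ℝ^p, and let π* := {a ∈ A : ⟨θ₀, φ_a⟩ = max_{a'∈A} ⟨θ₀, φ_{a'}⟩}. Then the first-order expansion holds: (max_{a∈A} ⟨θ₀ + b, φ_a⟩ − max_{a∈A} ⟨θ₀, φ_a⟩ − max_{a∈π*} ⟨b, φ_a⟩) / ‖b‖ tends to 0 as b ∈ ℝ^p \ {0} tends to 0. -/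
open Filter
open scoped RealInnerProductSpace

/-- First-order expansion of `θ ↦ max_a ⟨θ, φ_a⟩` at `θ₀`:
`(max_a ⟨θ₀ + b, φ_a⟩ - max_a ⟨θ₀, φ_a⟩ - max_{a ∈ π*} ⟨b, φ_a⟩)/‖b‖ → 0`
as `b → 0`, `b ≠ 0`, where `π*` is the set of maximizers of `a ↦ ⟨θ₀, φ_a⟩`. -/
theorem stmt_4 (p : ℕ) (hp : 1 ≤ p) (A : Type*) [Fintype A] [DecidableEq A]
    (hA : (Finset.univ : Finset A).Nonempty)
    (φ : A → EuclideanSpace ℝ (Fin p)) (θ₀ : EuclideanSpace ℝ (Fin p))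
    (πs : Finset A)
    (hπ : πs = Finset.univ.filter fun a =>
      ⟪θ₀, φ a⟫ = Finset.univ.sup' hA (fun a' => ⟪θ₀, φ a'⟫))
    (hne : πs.Nonempty) :
    Tendsto
      (fun b : EuclideanSpace ℝ (Fin p) =>
        (Finset.univ.sup' hA (fun a => ⟪θ₀ + b, φ a⟫)
          - Finset.univ.sup' hA (fun a => ⟪θ₀, φ a⟫)
          - πs.sup' hne (fun a => ⟪b, φ a⟫)) / ‖b‖)
      (nhdsWithin 0 {b | b ≠ 0}) (nhds 0) := by
  set M := Finset.univ.sup' hA (fun a' => ⟪θ₀, φ a'⟫) with hM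
  have hmem : ∀ a, a ∈ πs ↔ ⟪θ₀, φ a⟫ = M := by
    intro a; rw [hπ]; simp
  set C := (Finset.univ.sup' hA fun a => ‖φ a‖) ⊔ 1 with hC
  have hC0 : (0:ℝ) < C := lt_of_lt_of_le one_pos le_sup_right
  have hCa : ∀ a, ‖φ a‖ ≤ C := fun a =>
    le_trans (Finset.le_sup' (fun a => ‖φ a‖) (Finset.mem_univ a)) le_sup_left
  have hleM : ∀ a, ⟪θ₀, φ a⟫ ≤ M := fun a =>
    Finset.le_sup' (fun a' => ⟪θ₀, φ a'⟫) (Finset.mem_univ a)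
  obtain ⟨δ, hδ0, hδ⟩ : ∃ δ > 0, ∀ a, a ∉ πs → ⟪θ₀, φ a⟫ ≤ M - δ := by
    by_cases h : (Finset.univ \ πs).Nonempty
    · refine ⟨(Finset.univ \ πs).inf' h (fun a => M - ⟪θ₀, φ a⟫), ?_, ?_⟩
      · rw [gt_iff_lt, Finset.lt_inf'_iff]
        intro a ha
        have ha' : a ∉ πs := (Finset.mem_sdiff.mp ha).2
        have : ⟪θ₀, φ a⟫ ≠ M := fun hh => ha' ((hmem a).mpr hh)
        have := lt_of_le_of_ne (hleM a) this
        linarith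
      · intro a ha
        have := Finset.inf'_le (fun a => M - ⟪θ₀, φ a⟫)
          (Finset.mem_sdiff.mpr ⟨Finset.mem_univ a, ha⟩)
        linarith
    · refine ⟨1, one_pos, fun a ha => absurd ?_ ha⟩
      rw [Finset.sdiff_nonempty, not_not] at h
      exact h (Finset.mem_univ a)
  have key : ∀ b : EuclideanSpace ℝ (Fin p), ‖b‖ < δ / (2*C) →
      Finset.univ.sup' hA (fun a => ⟪θ₀ + b, φ a⟫)
        = M + πs.sup' hne (fun a => ⟪b, φ a⟫) := by
    intro b hb
    have hbC : 2 * (‖b‖ * C) ≤ δ := by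
      have h1 : ‖b‖ * (2*C) < δ := (lt_div_iff₀ (by positivity)).mp hb
      nlinarith
    set S := πs.sup' hne (fun a => ⟪b, φ a⟫) with hS
    have hinner : ∀ a, |⟪b, φ a⟫| ≤ ‖b‖ * C := fun a =>
      le_trans (abs_real_inner_le_norm b (φ a))
        (mul_le_mul_of_nonneg_left (hCa a) (norm_nonneg b))
    have hSlb : -(‖b‖ * C) ≤ S := by
      obtain ⟨a₁, ha₁⟩ := hne
      refine le_trans ?_ (Finset.le_sup' (fun a => ⟪b, φ a⟫) ha₁)
      have := (abs_le.mp (hinner a₁)).1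
      linarith
    apply le_antisymm
    · apply Finset.sup'_le
      intro a _
      rw [inner_add_left]
      by_cases ha : a ∈ πs
      · have h1 : ⟪θ₀, φ a⟫ = M := (hmem a).mp ha
        have h2 : ⟪b, φ a⟫ ≤ S := Finset.le_sup' (fun a => ⟪b, φ a⟫) ha
        linarith
      · have h1 : ⟪θ₀, φ a⟫ ≤ M - δ := hδ a ha
        have h2 : ⟪b, φ a⟫ ≤ ‖b‖ * C := (abs_le.mp (hinner a)).2
        linarith
    · obtain ⟨a₀, ha₀, hSa⟩ := Finset.exists_mem_eq_sup' hne (fun a => ⟪b, φ a⟫)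
      have h1 : ⟪θ₀, φ a₀⟫ = M := (hmem a₀).mp ha₀
      calc M + S = ⟪θ₀ + b, φ a₀⟫ := by rw [inner_add_left, h1, hS, hSa]
        _ ≤ _ := Finset.le_sup' (fun a => ⟪θ₀ + b, φ a⟫) (Finset.mem_univ a₀)
  have hev : ∀ᶠ b : EuclideanSpace ℝ (Fin p) in nhdsWithin 0 {b | b ≠ 0},
      (Finset.univ.sup' hA (fun a => ⟪θ₀ + b, φ a⟫)
          - M - πs.sup' hne (fun a => ⟪b, φ a⟫)) / ‖b‖ = 0 := by
    have hsmall : ∀ᶠ b : EuclideanSpace ℝ (Fin p) in nhds 0, ‖b‖ < δ / (2*C) := by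
      rw [Metric.eventually_nhds_iff]
      exact ⟨δ / (2*C), by positivity, fun y hy => by simpa [dist_zero_right] using hy⟩
    filter_upwards [hsmall.filter_mono nhdsWithin_le_nhds] with b hb
    rw [key b hb]
    ring_nf
  exact Tendsto.congr' (hev.mono fun b h => h.symm) tendsto_const_nhds
end

section
/- Let p ≥ 1, let A be a nonempty finite index set, let φ_a ∈ ℝ^p for each a ∈ A, let θ₀, b ∈ ℝ^p, and let π* := {a ∈ A : ⟨θ₀, φ_a⟩ = max_{a'∈A} ⟨θ₀, φ_{a'}⟩}. Then √n · (max_{a∈A} ⟨θ₀ + b/√n, φ_a⟩ − max_{a∈A} ⟨θ₀, φ_a⟩) converges, as the natural number n → ∞, to max_{a∈π*} ⟨b, φ_a⟩. -/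
open Filter
open scoped RealInnerProductSpace

/-- `√n (max_a ⟨θ₀ + b/√n, φ_a⟩ − max_a ⟨θ₀, φ_a⟩) → max_{a ∈ π*} ⟨b, φ_a⟩`
as `n → ∞`, where `π*` is the set of maximizers of `a ↦ ⟨θ₀, φ_a⟩`. -/
theorem stmt_9 (p : ℕ) (hp : 1 ≤ p) (A : Type*) [Fintype A] [DecidableEq A]
    (hA : (Finset.univ : Finset A).Nonempty)
    (φ : A → EuclideanSpace ℝ (Fin p)) (θ₀ b : EuclideanSpace ℝ (Fin p))
    (πs : Finset A)
    (hπ : πs = Finset.univ.filter fun a =>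
      ⟪θ₀, φ a⟫ = Finset.univ.sup' hA (fun a' => ⟪θ₀, φ a'⟫))
    (hne : πs.Nonempty) :
    Tendsto
      (fun n : ℕ =>
        Real.sqrt n *
          (Finset.univ.sup' hA (fun a => ⟪θ₀ + (Real.sqrt n)⁻¹ • b, φ a⟫)
            - Finset.univ.sup' hA (fun a => ⟪θ₀, φ a⟫)))
      atTop (nhds (πs.sup' hne (fun a => ⟪b, φ a⟫))) := by
  classical
  set g : A → ℝ := fun a => ⟪θ₀, φ a⟫ with hg
  set h : A → ℝ := fun a => ⟪b, φ a⟫ with hh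
  set M := Finset.univ.sup' hA g with hM
  set K := πs.sup' hne h with hK
  set C := Finset.univ.sup' hA (fun a => |h a|) with hC
  obtain ⟨a₀, ha₀⟩ : ∃ a, a ∈ πs := id hne
  have habs : ∀ a : A, |h a| ≤ C := by
    intro a; rw [hC]; exact Finset.le_sup' (fun a => |h a|) (Finset.mem_univ a)
  have hC0 : 0 ≤ C := le_trans (abs_nonneg (h a₀)) (habs a₀)
  have hmemπ : ∀ a ∈ πs, g a = M := by
    intro a ha
    rw [hπ] at ha
    exact (Finset.mem_filter.mp ha).2
  have hKC : -C ≤ K := by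
    have h1 : -C ≤ h a₀ := by
      have := habs a₀
      linarith [neg_abs_le (h a₀)]
    exact h1.trans (Finset.le_sup' _ ha₀)
  have hKh : ∀ a ∈ πs, h a ≤ K := fun a ha => Finset.le_sup' _ ha
  have hgM : ∀ a : A, g a ≤ M := fun a => Finset.le_sup' _ (Finset.mem_univ a)
  -- gap δ
  obtain ⟨δ, hδ0, hδ⟩ : ∃ δ > 0, ∀ a ∉ πs, g a ≤ M - δ := by
    rcases (Finset.univ \ πs).eq_empty_or_nonempty with hS | hS
    · refine ⟨1, one_pos, fun a ha => absurd ?_ ha⟩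
      by_contra hna
      have : a ∈ Finset.univ \ πs := Finset.mem_sdiff.mpr ⟨Finset.mem_univ a, hna⟩
      simp [hS] at this
    · refine ⟨M - (Finset.univ \ πs).sup' hS g, ?_, ?_⟩
      · have : (Finset.univ \ πs).sup' hS g < M := by
          rw [Finset.sup'_lt_iff]
          intro a ha
          have hna := (Finset.mem_sdiff.mp ha).2
          have : g a ≠ M := by
            intro hgeq
            exact hna (by rw [hπ]; exact Finset.mem_filter.mpr ⟨Finset.mem_univ a, hgeq⟩)
          exact lt_of_le_of_ne (hgM a) this
        linarith
      · intro a ha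
        have : g a ≤ (Finset.univ \ πs).sup' hS g :=
          Finset.le_sup' _ (Finset.mem_sdiff.mpr ⟨Finset.mem_univ a, ha⟩)
        linarith
  -- key claim
  have key : ∀ t : ℝ, 0 ≤ t → t * (2 * C) ≤ δ →
      Finset.univ.sup' hA (fun a => g a + t * h a) = M + t * K := by
    intro t ht hts
    apply le_antisymm
    · rw [Finset.sup'_le_iff]
      intro a _
      by_cases haπ : a ∈ πs
      · have := hKh a haπ
        have := hmemπ a haπ
        nlinarith
      · have h1 := hδ a haπ
        have h2 : t * h a ≤ t * C := by
          have := habs a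
          nlinarith [le_abs_self (h a)]
        have h3 : -(t * C) ≤ t * K := by nlinarith
        nlinarith
    · obtain ⟨a₁, ha₁, ha₁K⟩ := Finset.exists_mem_eq_sup' hne h
      have : M + t * K = g a₁ + t * h a₁ := by rw [hmemπ a₁ ha₁, hK, ha₁K]
      rw [this]
      exact Finset.le_sup' (fun a => g a + t * h a) (Finset.mem_univ a₁)
  -- rewrite inner products
  have hinner : ∀ (t : ℝ) (a : A), ⟪θ₀ + t • b, φ a⟫ = g a + t * h a := by
    intro t a
    rw [inner_add_left, real_inner_smul_left]
  -- eventual equality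
  have hev : ∀ᶠ n : ℕ in atTop,
      Real.sqrt n *
          (Finset.univ.sup' hA (fun a => ⟪θ₀ + (Real.sqrt n)⁻¹ • b, φ a⟫)
            - Finset.univ.sup' hA (fun a => ⟪θ₀, φ a⟫)) = K := by
    have hsqrt : Tendsto (fun n : ℕ => (Real.sqrt n)⁻¹) atTop (nhds 0) := by
      apply Tendsto.inv_tendsto_atTop
      apply tendsto_atTop_atTop.mpr
      intro c
      refine ⟨⌈c * c⌉₊, fun n hn => ?_⟩
      have h1 : c * c ≤ (n : ℝ) := le_trans (Nat.le_ceil _) (by exact_mod_cast hn)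
      calc c ≤ |c| := le_abs_self c
        _ = Real.sqrt (c * c) := (Real.sqrt_mul_self_eq_abs c).symm
        _ ≤ Real.sqrt n := Real.sqrt_le_sqrt h1
    have hpos : (0 : ℝ) < δ / (2 * C + 1) := by positivity
    have hev1 : ∀ᶠ n : ℕ in atTop, (Real.sqrt n)⁻¹ < δ / (2 * C + 1) :=
      hsqrt.eventually_lt_const hpos
    filter_upwards [hev1, eventually_ge_atTop 1] with n hn hn1
    set t := (Real.sqrt n)⁻¹ with hts
    have hsq : 0 < Real.sqrt n := Real.sqrt_pos.mpr (by exact_mod_cast hn1)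
    have ht0 : 0 ≤ t := by positivity
    have hts2 : t * (2 * C) ≤ δ := by
      have : t * (2 * C + 1) ≤ δ := by
        rw [← le_div_iff₀ (by positivity)]
        exact le_of_lt hn
      nlinarith
    have heq := key t ht0 hts2
    have : (fun a => ⟪θ₀ + t • b, φ a⟫) = fun a => g a + t * h a := by
      funext a; exact hinner t a
    rw [this, heq]
    have : M + t * K - Finset.univ.sup' hA (fun a => ⟪θ₀, φ a⟫) = t * K := by
      simp [hM, hg]
    rw [this, ← mul_assoc, mul_inv_cancel₀ (ne_of_gt hsq), one_mul]
  exact Tendsto.congr' (hev.mono fun n hn => hn.symm) tendsto_const_nhds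
end
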